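/- Let G be a graph with an edge {x, y} such that the closed neighborhood of x is contained in the closed neighborhood of y. Then for any 1 ≤ k ≤ β(G), the colon ideal (I(G∖y)^{{k}} : x) is contained in (I(G∖x)^{{k}} : y). -/

import Mathlib

open MvPolynomial

variable {V : Type*} [Fintype V] [DecidableEq V] {K : Type*} [Field K]

/-- `C` is a vertex cover of the simple graph `G`. -/
def IsVertexCover (G : SimpleGraph V) (C : Finset V) : Prop :=
  ∀ ⦃u v : V⦄, G.Adj u v → u ∈ C ∨ v ∈ C

/-- `C` is a minimal vertex cover of `G`. -/
def IsMinVertexCover (G : SimpleGraph V) (C : Finset V) : Prop :=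
  IsVertexCover G C ∧ ∀ D : Finset V, IsVertexCover G D → D ⊆ C → D = C

/-- The minimum vertex cover number `β(G)`. -/
noncomputable def vcNum (G : SimpleGraph V) : ℕ :=
  sInf {m : ℕ | ∃ C : Finset V, IsVertexCover G C ∧ C.card = m}

/-- The `k`-th squarefree symbolic power of the edge ideal of `G`: the ideal generated
by the squarefree monomials whose support meets every minimal vertex cover of `G` in at
least `k` vertices. -/
noncomputable def sqfSymbPow (K : Type*) [Field K] (G : SimpleGraph V) (k : ℕ) :
    Ideal (MvPolynomial V K) :=
  Ideal.span {m | ∃ A : Finset V, m = ∏ x ∈ A, X x ∧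
    ∀ C : Finset V, IsMinVertexCover G C → k ≤ (A ∩ C).card}

/-- The graph `G ∖ v`: the induced subgraph on the vertices other than `v`,
realized on the same vertex set by deleting all edges through `v`. -/
def delVert (G : SimpleGraph V) (v : V) : SimpleGraph V where
  Adj a b := G.Adj a b ∧ a ≠ v ∧ b ≠ v
  symm := ⟨fun a b ⟨h, ha, hb⟩ => ⟨h.symm, hb, ha⟩⟩
  loopless := ⟨fun a ⟨h, _, _⟩ => G.irrefl h⟩

/-!
A squarefree monomial lies in `I(H)^{{k}}` iff its support meets every minimal vertex cover of
`H` in at least `k` vertices, and a polynomial lies in this monomial ideal iff each of its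
monomials does. So it suffices to show: if `insert x S` meets every minimal cover of `G ∖ y` in
`k` vertices, then `insert y S` meets every minimal cover `C` of `G ∖ x` in `k` vertices.
Since `x` is isolated in `G ∖ x`, `x ∉ C`. If `y ∉ C`, then `C` itself covers `G ∖ y`, because
`N(x) ⊆ N[y]`; if `y ∈ C`, then `insert x C` covers `G ∖ y`. A minimal cover `D` of `G ∖ y`
inside it avoids `y`, and swapping `x` and `y` embeds `insert x S ∩ D` into `insert y S ∩ C`.
-/

omit [Fintype V] [DecidableEq V] in
theorem IsVertexCover.exists_isMinVertexCover_subset {H : SimpleGraph V} {C : Finset V}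
    (hC : IsVertexCover H C) : ∃ D ⊆ C, IsMinVertexCover H D := by
  induction C using Finset.strongInductionOn with
  | _ C ih =>
    by_cases hmin : ∀ D, IsVertexCover H D → D ⊆ C → D = C
    · exact ⟨C, subset_rfl, hC, hmin⟩
    · push Not at hmin
      obtain ⟨D, hD, hDC, hne⟩ := hmin
      obtain ⟨E, hED, hE⟩ := ih D (ssubset_of_subset_of_ne hDC hne) hD
      exact ⟨E, hED.trans hDC, hE⟩

omit [Fintype V] in
theorem IsMinVertexCover.notMem_of_forall_not_adj {H : SimpleGraph V} {D : Finset V}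
    (hD : IsMinVertexCover H D) {v : V} (hv : ∀ b, ¬ H.Adj v b) : v ∉ D := by
  intro hvD
  have hcov : IsVertexCover H (D.erase v) := by
    intro a b hab
    rcases hD.1 hab with h | h
    · exact Or.inl (Finset.mem_erase.2 ⟨by rintro rfl; exact hv b hab, h⟩)
    · exact Or.inr (Finset.mem_erase.2 ⟨by rintro rfl; exact hv a hab.symm, h⟩)
  exact Finset.notMem_erase v D (by rwa [hD.2 _ hcov (Finset.erase_subset v D)])

omit [Fintype V] [DecidableEq V] in
theorem delVert_not_adj_self (G : SimpleGraph V) (v b : V) : ¬ (delVert G v).Adj v b :=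
  fun h => h.2.1 rfl

omit [Fintype V] in
theorem IsVertexCover.delVert_insert {G : SimpleGraph V} {x y : V} {C : Finset V}
    (hC : IsVertexCover (delVert G x) C) : IsVertexCover (delVert G y) (insert x C) := by
  rintro a b ⟨hab, -, -⟩
  by_cases hax : a = x
  · exact Or.inl (hax ▸ Finset.mem_insert_self x C)
  by_cases hbx : b = x
  · exact Or.inr (hbx ▸ Finset.mem_insert_self x C)
  exact (hC ⟨hab, hax, hbx⟩).imp Finset.mem_insert_of_mem Finset.mem_insert_of_mem

omit [Fintype V] in
theorem IsVertexCover.delVert_of_notMem {G : SimpleGraph V} {x y : V} (hxy : x ≠ y)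
    (hN : (G.neighborSet x ∪ {x} : Set V) ⊆ G.neighborSet y ∪ {y}) {C : Finset V}
    (hC : IsVertexCover (delVert G x) C) (hyC : y ∉ C) : IsVertexCover (delVert G y) C := by
  have hxb : ∀ b, G.Adj x b → b ≠ y → b ∈ C := by
    intro b hxb hby
    have hyb : G.Adj y b := (hN (Or.inl hxb)).resolve_right hby
    exact (hC ⟨hyb, hxy.symm, hxb.ne'⟩).resolve_left hyC
  rintro a b ⟨hab, hay, hby⟩
  by_cases hax : a = x
  · exact Or.inr (hxb b (hax ▸ hab) hby)
  by_cases hbx : b = x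
  · exact Or.inl (hxb a (hbx ▸ hab.symm) hay)
  exact hC ⟨hab, hax, hbx⟩

def MeetsMinCovers (H : SimpleGraph V) (k : ℕ) (A : Finset V) : Prop :=
  ∀ C, IsMinVertexCover H C → k ≤ (A ∩ C).card

omit [Fintype V] in
theorem MeetsMinCovers.mono {H : SimpleGraph V} {k : ℕ} {A B : Finset V}
    (hA : MeetsMinCovers H k A) (hAB : A ⊆ B) : MeetsMinCovers H k B :=
  fun C hC => (hA C hC).trans (Finset.card_le_card (Finset.inter_subset_inter_right hAB))

omit [Fintype V] in
theorem MeetsMinCovers.delVert_insert_swap {G : SimpleGraph V} {x y : V} (hxy : x ≠ y)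
    (hN : (G.neighborSet x ∪ {x} : Set V) ⊆ G.neighborSet y ∪ {y}) {k : ℕ} {S : Finset V}
    (hS : MeetsMinCovers (delVert G y) k (insert x S)) :
    MeetsMinCovers (delVert G x) k (insert y S) := by
  intro C hC
  have hxC : x ∉ C := hC.notMem_of_forall_not_adj (delVert_not_adj_self G x)
  by_cases hyC : y ∈ C
  · obtain ⟨D, hDC, hD⟩ := (hC.1.delVert_insert (y := y)).exists_isMinVertexCover_subset
    have hyD : y ∉ D := hD.notMem_of_forall_not_adj (delVert_not_adj_self G y)
    refine (hS D hD).trans (Finset.card_le_card_of_injOn (Equiv.swap x y) ?_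
      (Equiv.injective _).injOn)
    intro a ha
    rw [Finset.mem_coe, Finset.mem_inter, Finset.mem_insert] at ha ⊢
    by_cases hax : a = x
    · subst hax
      simp [hyC]
    · obtain ⟨haS, haD⟩ := ha
      have hay : a ≠ y := fun h => hyD (h ▸ haD)
      rw [Equiv.swap_apply_of_ne_of_ne hax hay]
      exact ⟨Or.inr (haS.resolve_left hax), (Finset.mem_insert.1 (hDC haD)).resolve_left hax⟩
  · obtain ⟨D, hDC, hD⟩ := (hC.1.delVert_of_notMem hxy hN hyC).exists_isMinVertexCover_subset
    refine (hS D hD).trans (Finset.card_le_card fun a ha => ?_)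
    simp only [Finset.mem_inter, Finset.mem_insert] at ha ⊢
    obtain ⟨rfl | haS, haD⟩ := ha
    · exact absurd (hDC haD) hxC
    · exact ⟨Or.inr haS, hDC haD⟩

omit [Fintype V] in
theorem sum_single_one_le_iff {A : Finset V} {e : V →₀ ℕ} :
    ∑ a ∈ A, Finsupp.single a 1 ≤ e ↔ A ⊆ e.support := by
  simp only [Finsupp.le_def, Finsupp.finsetSum_apply, Finsupp.single_apply, Finset.sum_ite_eq',
    Finset.subset_iff, Finsupp.mem_support_iff]
  grind

omit [Fintype V] in
theorem mem_sqfSymbPow_iff {H : SimpleGraph V} {k : ℕ} {p : MvPolynomial V K} :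
    p ∈ sqfSymbPow K H k ↔ ∀ d ∈ p.support, MeetsMinCovers H k d.support := by
  have hgen : {m | ∃ A : Finset V, m = ∏ x ∈ A, X x ∧ MeetsMinCovers H k A} =
      (fun s => monomial s (1 : K)) ''
        ((fun A => ∑ a ∈ A, Finsupp.single a 1) '' {A | MeetsMinCovers H k A}) := by
    ext m
    simp [monomial_sum_one, X, eq_comm, and_comm]
  change p ∈ Ideal.span {m | ∃ A : Finset V, m = ∏ x ∈ A, X x ∧ MeetsMinCovers H k A} ↔ _
  rw [hgen, mem_ideal_span_monomial_image]
  refine forall₂_congr fun d _ => ⟨?_, fun hd => ⟨_, ⟨d.support, hd, rfl⟩, ?_⟩⟩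
  · rintro ⟨_, ⟨A, hA, rfl⟩, hAd⟩
    exact hA.mono (sum_single_one_le_iff.1 hAd)
  · exact sum_single_one_le_iff.2 subset_rfl

omit [Fintype V] in
theorem mem_colon_sqfSymbPow_iff {H : SimpleGraph V} {k : ℕ} {v : V} {f : MvPolynomial V K} :
    f ∈ Submodule.colon (sqfSymbPow K H k) (Ideal.span {X v} : Ideal (MvPolynomial V K)) ↔
      ∀ e ∈ f.support, MeetsMinCovers H k (insert v e.support) := by
  rw [Ideal.mem_colon_span_singleton, mul_comm, mem_sqfSymbPow_iff, support_X_mul]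
  simp only [Finset.forall_mem_map, addLeftEmbedding_apply, Finsupp.support_add_eq_union,
    Finsupp.support_single _ one_ne_zero, ← Finset.insert_eq]

theorem stmt8_general (G : SimpleGraph V) (x y : V) (hxy : G.Adj x y)
    (hN : (G.neighborSet x ∪ {x} : Set V) ⊆ G.neighborSet y ∪ {y})
    (k : ℕ) :
    Submodule.colon (sqfSymbPow K (delVert G y) k)
        (Ideal.span {(X x : MvPolynomial V K)}) ≤
      Submodule.colon (sqfSymbPow K (delVert G x) k)
        (Ideal.span {(X y : MvPolynomial V K)}) := by
  intro f hf
  rw [mem_colon_sqfSymbPow_iff] at hf ⊢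
  exact fun e he => (hf e he).delVert_insert_swap hxy.ne hN

theorem stmt8 (G : SimpleGraph V) (x y : V) (hxy : G.Adj x y)
    (hN : (G.neighborSet x ∪ {x} : Set V) ⊆ G.neighborSet y ∪ {y})
    (k : ℕ) (hk1 : 1 ≤ k) (hk2 : k ≤ vcNum G) :
    Submodule.colon (sqfSymbPow K (delVert G y) k)
        (Ideal.span {(X x : MvPolynomial V K)}) ≤
      Submodule.colon (sqfSymbPow K (delVert G x) k)
        (Ideal.span {(X y : MvPolynomial V K)}) :=
  stmt8_general G x y hxy hN k
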